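/- arXiv:1609.00933 — 4 statements merged into one kernel-verified Lean document; each statement's English description precedes it below -/
import Mathlib

section
/- In a compact graph-like space (X,V,E), for every separation (A,B) of the vertex set V the induced cut E(A,B) is a finite set of edges. -/
open Set Topology Filter Function

universe u

/-- A compact graph-like space structure on a topological space `X`:
a closed zero-dimensional vertex set `V` together with an index type `E`
(carrying the discrete topology) such that `X \ V ≅ E × (0,1)`. -/
structure GraphLike (X : Type u) [TopologicalSpace X] where
  V : Set X
  closedV : IsClosed V
  zeroDimV : TotallyDisconnectedSpace V
  E : Type
  homeo :
    letI : TopologicalSpace E := ⊥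
    Nonempty ((Vᶜ : Set X) ≃ₜ (E × ↥(Set.Ioo (0 : ℝ) 1)))

variable {X : Type u} [TopologicalSpace X]

/-- An edge of a graph-like space: a connected component of `X \ V`. -/
def GraphLike.IsEdge (G : GraphLike X) (e : Set X) : Prop :=
  ∃ x, x ∈ (G.V)ᶜ ∧ e = connectedComponentIn (G.V)ᶜ x

/-- A subset of the vertex set which is clopen in the subspace `V`. -/
def GraphLike.ClopenIn (G : GraphLike X) (C : Set X) : Prop :=
  C ⊆ G.V ∧ IsClosed C ∧ IsClosed (G.V \ C)

/-- A separation of a graph-like space: a partition of the vertex set into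
two disjoint clopen pieces. -/
structure GraphLike.Separation (G : GraphLike X) where
  A : Set X
  B : Set X
  clopenA : G.ClopenIn A
  clopenB : G.ClopenIn B
  disjoint : A ∩ B = ∅
  union : A ∪ B = G.V

/-- The cut induced by a pair of vertex sets: all edges whose closure meets both. -/
def GraphLike.cut (G : GraphLike X) (A B : Set X) : Set (Set X) :=
  {e | G.IsEdge e ∧ (closure e ∩ A).Nonempty ∧ (closure e ∩ B).Nonempty}

/-- A cut is even if it is finite of even cardinality. -/
def GraphLike.EvenCut (G : GraphLike X) (A B : Set X) : Prop :=
  (G.cut A B).Finite ∧ Even (G.cut A B).ncard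

/-- Product of locally connected spaces is locally connected. -/
lemma prod_locallyConnectedSpace {α β : Type*} [TopologicalSpace α] [TopologicalSpace β]
    [LocallyConnectedSpace α] [LocallyConnectedSpace β] :
    LocallyConnectedSpace (α × β) := by
  rw [locallyConnectedSpace_iff_connected_subsets]
  rintro ⟨a, b⟩ U hU
  obtain ⟨s, hs, t, ht, hst⟩ := mem_nhds_prod_iff.mp hU
  obtain ⟨s', hs', hs'c, hs's⟩ :=
    locallyConnectedSpace_iff_connected_subsets.mp ‹LocallyConnectedSpace α› a s hs
  obtain ⟨t', ht', ht'c, ht't⟩ :=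
    locallyConnectedSpace_iff_connected_subsets.mp ‹LocallyConnectedSpace β› b t ht
  exact ⟨s' ×ˢ t', prod_mem_nhds hs' ht', hs'c.prod ht'c,
    (Set.prod_mono hs's ht't).trans hst⟩

/-- In a compact graph-like space, every cut induced by a
separation of the vertex set is finite. -/
theorem cut_finite_of_separation [CompactSpace X] [TopologicalSpace.MetrizableSpace X]
    (G : GraphLike X) (S : G.Separation) :
    (G.cut S.A S.B).Finite := by
  classical
  -- The complement of the vertex set is locally connected.
  letI : TopologicalSpace G.E := ⊥
  haveI : DiscreteTopology G.E := ⟨rfl⟩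
  haveI : LocallyConnectedSpace ↥(Set.Ioo (0 : ℝ) 1) := isOpen_Ioo.locallyConnectedSpace
  haveI : LocallyConnectedSpace (G.E × ↥(Set.Ioo (0 : ℝ) 1)) := prod_locallyConnectedSpace
  obtain ⟨h⟩ := G.homeo
  haveI hLC : LocallyConnectedSpace ((G.V)ᶜ : Set X) :=
    h.isOpenEmbedding.locallyConnectedSpace
  have hVo : IsOpen (G.V)ᶜ := G.closedV.isOpen_compl
  -- connected components of the complement of `V` are open in `X`
  have hcompOpen : ∀ x ∈ (G.V)ᶜ, IsOpen (connectedComponentIn (G.V)ᶜ x) := by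
    intro x hx
    rw [connectedComponentIn_eq_image hx]
    exact hVo.isOpenEmbedding_subtypeVal.isOpenMap _ isOpen_connectedComponent
  -- closure of a component meets the complement of `V` only inside the component
  have hclosure : ∀ x ∈ (G.V)ᶜ, closure (connectedComponentIn (G.V)ᶜ x) ∩ (G.V)ᶜ ⊆
      connectedComponentIn (G.V)ᶜ x := by
    intro x hx y ⟨hy1, hy2⟩
    rw [connectedComponentIn_eq_image hx] at hy1 ⊢
    have : (⟨y, hy2⟩ : ((G.V)ᶜ : Set X)) ∈
        closure (connectedComponent (⟨x, hx⟩ : ((G.V)ᶜ : Set X))) := by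
      rw [Topology.IsEmbedding.subtypeVal.closure_eq_preimage_closure_image]
      exact hy1
    rw [isClosed_connectedComponent.closure_eq] at this
    exact ⟨⟨y, hy2⟩, this, rfl⟩
  -- separate A and B by disjoint open sets
  have hA : IsCompact S.A := S.clopenA.2.1.isCompact
  have hB : IsCompact S.B := S.clopenB.2.1.isCompact
  have hdisj : Disjoint S.A S.B := Set.disjoint_iff_inter_eq_empty.mpr S.disjoint
  obtain ⟨U, W, hU, hW, hAU, hBW, hUW⟩ := SeparatedNhds.of_isCompact_isCompact hA hB hdisj
  -- the compact set avoiding both open sets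
  set K : Set X := (U ∪ W)ᶜ with hKdef
  have hKcl : IsClosed K := (hU.union hW).isClosed_compl
  have hKcomp : IsCompact K := hKcl.isCompact
  have hKV : K ⊆ (G.V)ᶜ := by
    intro x hx hxV
    have : x ∈ S.A ∪ S.B := S.union ▸ hxV
    exact hx (this.imp (fun h => hAU h) (fun h => hBW h))
  -- every edge in the cut meets K
  have hmeet : ∀ e ∈ G.cut S.A S.B, ∃ x ∈ K, e = connectedComponentIn (G.V)ᶜ x := by
    rintro e ⟨⟨x0, hx0, rfl⟩, hEA, hEB⟩
    have hpc : IsPreconnected (closure (connectedComponentIn (G.V)ᶜ x0)) :=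
      isPreconnected_connectedComponentIn.closure
    by_cases hsub : closure (connectedComponentIn (G.V)ᶜ x0) ⊆ U ∪ W
    · obtain ⟨z, hz⟩ := hpc U W hU hW hsub
        (hEA.imp fun y hy => ⟨hy.1, hAU hy.2⟩)
        (hEB.imp fun y hy => ⟨hy.1, hBW hy.2⟩)
      exact absurd (hUW.ne_of_mem hz.2.1 hz.2.2) (fun hne => hne rfl)
    · obtain ⟨x, hxcl, hxK⟩ := Set.not_subset.mp hsub
      have hxe : x ∈ connectedComponentIn (G.V)ᶜ x0 :=
        hclosure x0 hx0 ⟨hxcl, hKV hxK⟩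
      exact ⟨x, hxK, (connectedComponentIn_eq hxe)⟩
  -- cover K by finitely many components
  obtain ⟨T, hTK, hTfin, hcover⟩ := hKcomp.elim_finite_subcover_image
    (fun x (hx : x ∈ K) => hcompOpen x (hKV hx))
    (fun x hx => Set.mem_biUnion hx (mem_connectedComponentIn (hKV hx)))
  refine (hTfin.image (fun x => connectedComponentIn (G.V)ᶜ x)).subset ?_
  intro e he
  obtain ⟨x, hxK, rfl⟩ := hmeet e he
  obtain ⟨t, htT, hxt⟩ := Set.mem_iUnion₂.mp (hcover hxK)
  exact ⟨t, htT, connectedComponentIn_eq hxt⟩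
end

section
/- Let (X,V,E) be a compact graph-like space and let C ⊆ X be a subspace homeomorphic to the unit circle S¹. Then C is a standard subspace of X, i.e. every edge of X that meets C is entirely contained in C. -/
open Set Topology Filter Function

universe u

variable {X : Type u} [TopologicalSpace X]

/-! Every edge is the image of an open embedding of `(0, 1)`, and every point of a circle is a
cut point of arbitrarily small connected subsets of the circle. A connected subset of the real
line that is disconnected by removing one of its points is a neighbourhood of that point; hence a
small such arc of `C` through a point of an edge `e` is a neighbourhood of that point. So `e ∩ C`
is open, it is relatively closed in `e` since `C` is compact, and the connected edge `e` lies
in `C`. -/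

section CutPoint

variable {Y Z : Type*} [TopologicalSpace Y] [TopologicalSpace Z]

def IsCutPoint (A : Set Y) (y : Y) : Prop :=
  IsPreconnected A ∧ y ∈ A ∧ ¬IsPreconnected (A \ {y})

/-- Unlike the notion of continuum theory, `A` need not be a neighbourhood of `y`. -/
def IsLocalCutPoint (y : Y) : Prop :=
  ∀ N ∈ 𝓝 y, ∃ A ⊆ N, IsCutPoint A y

theorem Topology.IsEmbedding.isCutPoint_image_iff {f : Y → Z} (hf : IsEmbedding f) {A : Set Y}
    {y : Y} : IsCutPoint (f '' A) (f y) ↔ IsCutPoint A y := by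
  rw [IsCutPoint, IsCutPoint, ← image_singleton, ← image_sdiff hf.injective,
    hf.isInducing.isPreconnected_image, hf.isInducing.isPreconnected_image,
    hf.injective.mem_set_image]

theorem Topology.IsEmbedding.isCutPoint_preimage_iff {f : Y → Z} (hf : IsEmbedding f) {A : Set Z}
    (hA : A ⊆ range f) {y : Y} : IsCutPoint (f ⁻¹' A) y ↔ IsCutPoint A (f y) := by
  rw [← hf.isCutPoint_image_iff, image_preimage_eq_of_subset hA]

theorem Topology.IsEmbedding.exists_isCutPoint_subset_range {f : Y → Z} (hf : IsEmbedding f)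
    {y : Y} (hy : IsLocalCutPoint y) {N : Set Z} (hN : N ∈ 𝓝 (f y)) :
    ∃ A ⊆ N ∩ range f, IsCutPoint A (f y) := by
  obtain ⟨A, hAN, hA⟩ := hy _ (hf.continuous.continuousAt.preimage_mem_nhds hN)
  exact ⟨f '' A, subset_inter (image_subset_iff.2 hAN) (image_subset_range f A),
    hf.isCutPoint_image_iff.2 hA⟩

theorem Topology.IsOpenEmbedding.isLocalCutPoint_iff {f : Y → Z} (hf : IsOpenEmbedding f)
    {y : Y} : IsLocalCutPoint (f y) ↔ IsLocalCutPoint y := by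
  refine ⟨fun hfy N hN => ?_, fun hy N hN => ?_⟩
  · obtain ⟨A, hAN, hA⟩ := hfy _ (hf.isOpenMap.image_mem_nhds hN)
    refine ⟨f ⁻¹' A, ?_, (hf.isEmbedding.isCutPoint_preimage_iff
      (hAN.trans (image_subset_range f N))).2 hA⟩
    rw [← hf.injective.preimage_image N]
    exact preimage_mono hAN
  · obtain ⟨A, hAN, hA⟩ := hf.isEmbedding.exists_isCutPoint_subset_range hy hN
    exact ⟨A, hAN.trans inter_subset_left, hA⟩

theorem IsLocalHomeomorph.isLocalCutPoint {f : Y → Z} (hf : IsLocalHomeomorph f) {y : Y}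
    (hy : IsLocalCutPoint y) : IsLocalCutPoint (f y) := by
  obtain ⟨e, hys, rfl⟩ := hf y
  have hy' : IsLocalCutPoint (⟨y, hys⟩ : e.source) :=
    e.open_source.isOpenEmbedding_subtypeVal.isLocalCutPoint_iff.1 hy
  exact e.isOpenEmbedding_restrict.isLocalCutPoint_iff.2 hy'

end CutPoint

section Order

variable {Y : Type*} [TopologicalSpace Y] {α : Type*} [ConditionallyCompleteLinearOrder α]
  [TopologicalSpace α] [OrderTopology α] [DenselyOrdered α]

instance Set.Ioo.preconnectedSpace {a b : α} : PreconnectedSpace (Ioo a b) :=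
  Subtype.preconnectedSpace isPreconnected_Ioo

theorem isCutPoint_Icc {a b x : α} (hax : a < x) (hxb : x < b) : IsCutPoint (Icc a b) x := by
  refine ⟨isPreconnected_Icc, ⟨hax.le, hxb.le⟩, fun h => ?_⟩
  have hx := h.Icc_subset ⟨left_mem_Icc.2 (hax.trans hxb).le, hax.ne⟩
    ⟨right_mem_Icc.2 (hax.trans hxb).le, hxb.ne'⟩ ⟨hax.le, hxb.le⟩
  exact hx.2 rfl

theorem OrderTopology.isLocalCutPoint [NoMinOrder α] [NoMaxOrder α] (x : α) :
    IsLocalCutPoint x := by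
  intro N hN
  obtain ⟨a, b, ⟨hax, hxb⟩, hab⟩ := mem_nhds_iff_exists_Ioo_subset.1 hN
  obtain ⟨a', haa', ha'x⟩ := exists_between hax
  obtain ⟨b', hxb', hb'b⟩ := exists_between hxb
  exact ⟨Icc a' b', (Icc_subset_Ioo haa' hb'b).trans hab, isCutPoint_Icc ha'x hxb'⟩

theorem IsCutPoint.exists_lt {T : Set α} {t : α} (h : IsCutPoint T t) : ∃ a ∈ T, a < t := by
  obtain ⟨hT, htT, hcut⟩ := h
  by_contra! hge
  refine hcut (OrdConnected.isPreconnected ⟨fun a ha b hb c hc => ?_⟩)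
  exact ⟨hT.Icc_subset ha.1 hb.1 hc,
    ((lt_of_le_of_ne (hge a ha.1) (Ne.symm ha.2)).trans_le hc.1).ne'⟩

theorem IsCutPoint.mem_nhds {T : Set α} {t : α} (h : IsCutPoint T t) : T ∈ 𝓝 t := by
  obtain ⟨a, haT, hat⟩ := h.exists_lt
  obtain ⟨b, hbT, htb⟩ := IsCutPoint.exists_lt (α := αᵒᵈ) h
  exact mem_of_superset (Icc_mem_nhds hat htb) (h.1.Icc_subset haT hbT)

theorem IsCutPoint.mem_nhds_of_isEmbedding {j : Y → α} (hj : IsEmbedding j) {B : Set Y} {y : Y}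
    (h : IsCutPoint B y) : B ∈ 𝓝 y := by
  have := hj.continuous.continuousAt.preimage_mem_nhds (hj.isCutPoint_image_iff.2 h).mem_nhds
  rwa [hj.injective.preimage_image] at this

theorem IsCutPoint.mem_nhds_of_isOpenEmbedding {ι : Y → X} (hι : IsOpenEmbedding ι) {j : Y → α}
    (hj : IsEmbedding j) {A : Set X} (hA : A ⊆ range ι) {y : Y} (h : IsCutPoint A (ι y)) :
    A ∈ 𝓝 (ι y) := by
  have hB := ((hι.isEmbedding.isCutPoint_preimage_iff hA).2 h).mem_nhds_of_isEmbedding hj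
  simpa only [image_preimage_eq_of_subset hA] using hι.isOpenMap.image_mem_nhds hB

theorem Topology.IsOpenEmbedding.range_subset_of_isLocalCutPoint [PreconnectedSpace Y]
    {Z : Type*} [TopologicalSpace Z] {ι : Y → X} (hι : IsOpenEmbedding ι) {j : Y → α}
    (hj : IsEmbedding j) {γ : Z → X} (hγ : IsEmbedding γ) (hcut : ∀ z : Z, IsLocalCutPoint z)
    (hγc : IsClosed (range γ)) (hne : (range ι ∩ range γ).Nonempty) : range ι ⊆ range γ := by
  have hopen : IsOpen (range ι ∩ range γ) := by
    refine isOpen_iff_mem_nhds.2 ?_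
    rintro _ ⟨⟨y, rfl⟩, z, hz⟩
    obtain ⟨A, hA, hAcut⟩ := hγ.exists_isCutPoint_subset_range (hcut z)
      (hι.isOpen_range.mem_nhds ⟨y, hz.symm⟩)
    rw [hz] at hAcut
    exact mem_of_superset
      (hAcut.mem_nhds_of_isOpenEmbedding hι hj (hA.trans inter_subset_left)) hA
  have hsub : range ι ⊆ range ι ∩ range γ :=
    (isPreconnected_range hι.continuous).subset_of_closure_inter_subset hopen
      (hne.mono fun x hx => ⟨hx.1, hx⟩)
      fun x hx => ⟨hx.2, closure_minimal inter_subset_right hγc hx.1⟩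
  exact hsub.trans inter_subset_right

end Order

theorem Circle.isLocalCutPoint (z : Circle) : IsLocalCutPoint z := by
  obtain ⟨θ, rfl⟩ := Circle.exp_surjective z
  exact isLocalHomeomorph_circleExp.isLocalCutPoint (OrderTopology.isLocalCutPoint θ)

theorem GraphLike.IsEdge.exists_isOpenEmbedding {G : GraphLike X} {e : Set X} (he : G.IsEdge e) :
    ∃ ι : Ioo (0 : ℝ) 1 → X, IsOpenEmbedding ι ∧ range ι = e := by
  let : TopologicalSpace G.E := ⊥
  have : DiscreteTopology G.E := ⟨rfl⟩
  obtain ⟨Φ⟩ := G.homeo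
  obtain ⟨x, hx, rfl⟩ := he
  set ε := (Φ ⟨x, hx⟩).1
  have hfibre : range (Prod.mk ε : Ioo (0 : ℝ) 1 → _) = {ε} ×ˢ univ := by
    ext ⟨a, t⟩
    simp [eq_comm]
  have hcomp : Φ '' connectedComponent ⟨x, hx⟩ = {ε} ×ˢ univ := by
    rw [← connectedComponentIn_univ, Φ.image_connectedComponentIn (mem_univ _), image_univ,
      Φ.range_coe, connectedComponentIn_univ, connectedComponent_prod,
      connectedComponent_eq_singleton, PreconnectedSpace.connectedComponent_eq_univ]
  refine ⟨Subtype.val ∘ Φ.symm ∘ Prod.mk ε,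
    G.closedV.isOpen_compl.isOpenEmbedding_subtypeVal.comp
      (Φ.symm.isOpenEmbedding.comp ⟨isEmbedding_prodMkRight ε, ?_⟩), ?_⟩
  · rw [hfibre]
    exact (isOpen_discrete _).prod isOpen_univ
  · rw [connectedComponentIn_eq_image hx, range_comp, range_comp, hfibre, ← hcomp, Φ.image_symm,
      Φ.preimage_image]

theorem circle_isStandardSubspace_general [TopologicalSpace.MetrizableSpace X]
    (G : GraphLike X) {C : Set X} (hC : Nonempty (C ≃ₜ Circle)) :
    ∀ e, G.IsEdge e → (e ∩ C).Nonempty → e ⊆ C := by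
  obtain ⟨h⟩ := hC
  have hγ : IsEmbedding (Subtype.val ∘ h.symm) := IsEmbedding.subtypeVal.comp h.symm.isEmbedding
  have hrange : range (Subtype.val ∘ h.symm) = C := by
    rw [range_comp, h.symm.range_coe, image_univ, Subtype.range_coe]
  intro e he hne
  obtain ⟨ι, hι, rfl⟩ := he.exists_isOpenEmbedding
  rw [← hrange] at hne ⊢
  exact hι.range_subset_of_isLocalCutPoint IsEmbedding.subtypeVal hγ Circle.isLocalCutPoint
    (isCompact_range hγ.continuous).isClosed hne

/-- A topological circle in a compact graph-like space is a standard
subspace: it contains every edge it meets. -/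
theorem circle_isStandardSubspace [CompactSpace X] [TopologicalSpace.MetrizableSpace X]
    (G : GraphLike X) {C : Set X} (hC : Nonempty (C ≃ₜ Circle)) :
    ∀ e, G.IsEdge e → (e ∩ C).Nonempty → e ⊆ C :=
  circle_isStandardSubspace_general G hC
end

section
/- Let (X,V,E) be a compact graph-like space and let C ⊆ X be a subspace homeomorphic to the unit circle S¹. Then for every separation (A,B) of V, the set of edges of X that are contained in C and belong to the cut E(A,B) is finite and has even cardinality. -/
/-!
Parametrize the circle as the image of `[c, c + 2π]` under `t ↦ exp (i t)`, starting and ending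
at a vertex of `A`, and pull `A` and `B` back to disjoint closed subsets of this interval. An edge
of the cut lying on the circle is the image of a gap `(a, b)` of their union whose ends have
different colours; conversely every such gap parametrizes a whole edge, because inside
`X \ V ≅ E × (0, 1)` an injective path is open (one-dimensional invariance of domain). Disjoint
compact sets of the line are at positive distance, so there are finitely many such gaps, and as
both ends of the interval lie in `A` the colour changes an even number of times.
-/

open Set Topology Filter Function

universe u

variable {X : Type u} [TopologicalSpace X]

def cutGaps (A B : Set ℝ) : Set (ℝ × ℝ) :=
  {p | p.1 < p.2 ∧ Disjoint (Ioo p.1 p.2) (A ∪ B) ∧ (p.1 ∈ A ∧ p.2 ∈ B ∨ p.1 ∈ B ∧ p.2 ∈ A)}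

section cutGaps

variable {A B : Set ℝ} {p q : ℝ × ℝ} {u v w : ℝ}

theorem cutGaps_comm (A B : Set ℝ) : cutGaps A B = cutGaps B A := by
  ext p
  simp only [cutGaps, mem_ofPred_eq, union_comm A B, or_comm]

theorem fst_mem_union_of_mem_cutGaps (hp : p ∈ cutGaps A B) : p.1 ∈ A ∪ B := by
  rcases hp.2.2 with ⟨h, -⟩ | ⟨h, -⟩
  exacts [Or.inl h, Or.inr h]

theorem snd_mem_union_of_mem_cutGaps (hp : p ∈ cutGaps A B) : p.2 ∈ A ∪ B := by
  rcases hp.2.2 with ⟨-, h⟩ | ⟨-, h⟩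
  exacts [Or.inr h, Or.inl h]

theorem snd_mem_iff_of_mem_cutGaps (hd : Disjoint A B) (hp : p ∈ cutGaps A B) :
    p.2 ∈ A ↔ p.1 ∉ A := by
  rcases hp.2.2 with ⟨h₁, h₂⟩ | ⟨h₁, h₂⟩
  · exact iff_of_false (disjoint_right.mp hd h₂) (not_not_intro h₁)
  · exact iff_of_true h₂ (disjoint_right.mp hd h₁)

theorem snd_le_fst_of_mem_cutGaps (hp : p ∈ cutGaps A B) (hq : q ∈ cutGaps A B)
    (h : p.1 < q.1) : p.2 ≤ q.1 :=
  not_lt.mp fun h' => disjoint_left.mp hp.2.1 ⟨h, h'⟩ (fst_mem_union_of_mem_cutGaps hq)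

theorem eq_of_mem_cutGaps_of_fst_eq (hp : p ∈ cutGaps A B) (hq : q ∈ cutGaps A B)
    (h : p.1 = q.1) : p = q := by
  have snd_le : ∀ {p q : ℝ × ℝ}, p ∈ cutGaps A B → q ∈ cutGaps A B → p.1 = q.1 → p.2 ≤ q.2 :=
    fun hp hq h => not_lt.mp fun h' =>
      disjoint_left.mp hp.2.1 ⟨h.trans_lt hq.1, h'⟩ (snd_mem_union_of_mem_cutGaps hq)
  exact Prod.ext h (le_antisymm (snd_le hp hq h) (snd_le hq hp h.symm))

theorem Icc_subset_of_mem_cutGaps (hsub : A ∪ B ⊆ Icc u v) (hp : p ∈ cutGaps A B) :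
    Icc p.1 p.2 ⊆ Icc u v :=
  Icc_subset_Icc (hsub (fst_mem_union_of_mem_cutGaps hp)).1
    (hsub (snd_mem_union_of_mem_cutGaps hp)).2

theorem Ioo_subset_of_mem_cutGaps (hsub : A ∪ B ⊆ Icc u v) (hp : p ∈ cutGaps A B) :
    Ioo p.1 p.2 ⊆ Ioo u v :=
  Ioo_subset_Ioo (hsub (fst_mem_union_of_mem_cutGaps hp)).1
    (hsub (snd_mem_union_of_mem_cutGaps hp)).2

/-- The last point of `A` before `y` and the first point of `B` after it bound a gap. -/
theorem exists_mem_cutGaps_of_mem_of_mem (hA : IsClosed A) (hB : IsClosed B)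
    (hd : Disjoint A B) {x y : ℝ} (hx : x ∈ A) (hy : y ∈ B) (hxy : x ≤ y) :
    ∃ p ∈ cutGaps A B, x ≤ p.1 ∧ p.2 ≤ y := by
  have hA' : IsCompact (A ∩ Icc x y) := isCompact_Icc.inter_left hA
  have ha : sSup (A ∩ Icc x y) ∈ A ∩ Icc x y := hA'.sSup_mem ⟨x, hx, le_rfl, hxy⟩
  set a := sSup (A ∩ Icc x y)
  have hB' : IsCompact (B ∩ Icc a y) := isCompact_Icc.inter_left hB
  have hb : sInf (B ∩ Icc a y) ∈ B ∩ Icc a y := hB'.sInf_mem ⟨y, hy, ha.2.2, le_rfl⟩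
  set b := sInf (B ∩ Icc a y)
  have hab : a < b := hb.2.1.lt_of_ne fun h => disjoint_left.mp hd ha.1 (h ▸ hb.1)
  refine ⟨(a, b), ⟨hab, disjoint_left.mpr ?_, Or.inl ⟨ha.1, hb.1⟩⟩, ha.2.1, hb.2.2⟩
  rintro t ⟨hat, htb⟩ (htA | htB)
  · exact hat.not_ge (le_csSup hA'.bddAbove ⟨htA, ha.2.1.trans hat.le, htb.le.trans hb.2.2⟩)
  · exact htb.not_ge (csInf_le hB'.bddBelow ⟨htB, hat.le, htb.le.trans hb.2.2⟩)

theorem exists_mem_cutGaps_of_not_iff (hA : IsClosed A) (hB : IsClosed B) (hd : Disjoint A B)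
    {x y : ℝ} (hx : x ∈ A ∪ B) (hy : y ∈ A ∪ B) (hxy : x ≤ y) (hxy' : ¬(x ∈ A ↔ y ∈ A)) :
    ∃ p ∈ cutGaps A B, x ≤ p.1 ∧ p.2 ≤ y := by
  rcases hx with hxA | hxB <;> rcases hy with hyA | hyB
  · exact absurd (iff_of_true hxA hyA) hxy'
  · exact exists_mem_cutGaps_of_mem_of_mem hA hB hd hxA hyB hxy
  · rw [cutGaps_comm]
    exact exists_mem_cutGaps_of_mem_of_mem hB hA hd.symm hxB hyA hxy
  · exact absurd (iff_of_false (disjoint_right.mp hd hxB) (disjoint_right.mp hd hyB)) hxy'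

theorem cutGaps_finite (hA : IsClosed A) (hB : IsClosed B) (hd : Disjoint A B)
    (hsub : A ∪ B ⊆ Icc u v) : (cutGaps A B).Finite := by
  have hAc : IsCompact A := isCompact_Icc.of_isClosed_subset hA (subset_union_left.trans hsub)
  obtain ⟨r, hr, hAB⟩ := Metric.exists_pos_forall_lt_edist hAc hB hd
  set δ : ℝ := (r : ℝ)
  have hδ : 0 < δ := hr
  have hAB' : ∀ x ∈ A, ∀ y ∈ B, δ < dist x y := fun x hx y hy => by
    have h := hAB x hx y hy
    rw [edist_nndist, ENNReal.coe_lt_coe] at h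
    exact_mod_cast h
  have hlen : ∀ p ∈ cutGaps A B, p.1 + δ ≤ p.2 := by
    rintro p ⟨hlt, -, hcol⟩
    have : δ < dist p.1 p.2 := by
      rcases hcol with ⟨h₁, h₂⟩ | ⟨h₁, h₂⟩
      · exact hAB' _ h₁ _ h₂
      · rw [dist_comm]; exact hAB' _ h₂ _ h₁
    rw [Real.dist_eq, abs_sub_comm, abs_of_pos (sub_pos.mpr hlt)] at this
    linarith
  have hinj : InjOn (fun p : ℝ × ℝ => ⌊p.1 / δ⌋) (cutGaps A B) := by
    intro p hp q hq hpq
    have hclose := Int.abs_sub_lt_one_of_floor_eq_floor hpq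
    rw [← sub_div, abs_div, abs_of_pos hδ, div_lt_one hδ, abs_lt] at hclose
    rcases lt_trichotomy p.1 q.1 with h | h | h
    · linarith [hlen p hp, snd_le_fst_of_mem_cutGaps hp hq h]
    · exact eq_of_mem_cutGaps_of_fst_eq hp hq h
    · linarith [hlen q hq, snd_le_fst_of_mem_cutGaps hq hp h]
  refine Finite.of_finite_image ((finite_Icc ⌊u / δ⌋ ⌊v / δ⌋).subset ?_) hinj
  rintro _ ⟨p, hp, rfl⟩
  have hp₁ := hsub (fst_mem_union_of_mem_cutGaps hp)
  exact ⟨Int.floor_mono (by gcongr; exact hp₁.1), Int.floor_mono (by gcongr; exact hp₁.2)⟩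

theorem injOn_image_Ioo_cutGaps {Y : Type*} {γ : ℝ → Y} (hsub : A ∪ B ⊆ Icc u v)
    (hinj : InjOn γ (Ioo u v)) : InjOn (fun p : ℝ × ℝ => γ '' Ioo p.1 p.2) (cutGaps A B) := by
  intro p hp q hq hpq
  have h := (hinj.image_eq_image_iff (Ioo_subset_of_mem_cutGaps hsub hp)
    (Ioo_subset_of_mem_cutGaps hsub hq)).mp hpq
  exact Prod.ext (by rw [← csInf_Ioo hp.1, h, csInf_Ioo hq.1])
    (by rw [← csSup_Ioo hp.1, h, csSup_Ioo hq.1])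

theorem mem_iff_fst_mem_of_forall_fst_le (hA : IsClosed A) (hB : IsClosed B) (hd : Disjoint A B)
    (hw : w ∈ A ∪ B) (hp : p ∈ cutGaps A B) (hwp : w ≤ p.1)
    (hfirst : ∀ q ∈ cutGaps A B, w ≤ q.1 → p.1 ≤ q.1) : w ∈ A ↔ p.1 ∈ A := by
  by_contra hcol
  obtain ⟨q, hq, hwq, hqp⟩ :=
    exists_mem_cutGaps_of_not_iff hA hB hd hw (fst_mem_union_of_mem_cutGaps hp) hwp hcol
  linarith [hfirst q hq hwq, hq.1]

theorem cutGaps_sep_snd_le_eq_sdiff (hp : p ∈ cutGaps A B) (hwp : w ≤ p.1)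
    (hfirst : ∀ q ∈ cutGaps A B, w ≤ q.1 → p.1 ≤ q.1) :
    {q ∈ cutGaps A B | p.2 ≤ q.1} = {q ∈ cutGaps A B | w ≤ q.1} \ {p} := by
  ext q
  simp only [Set.mem_sdiff, mem_sep_iff, mem_singleton_iff]
  constructor
  · rintro ⟨hq, hpq⟩
    exact ⟨⟨hq, by linarith [hp.1]⟩, by rintro rfl; linarith [hp.1]⟩
  · rintro ⟨⟨hq, hwq⟩, hne⟩
    refine ⟨hq, ?_⟩
    rcases (hfirst q hq hwq).lt_or_eq with h | h
    · exact snd_le_fst_of_mem_cutGaps hp hq h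
    · exact absurd (eq_of_mem_cutGaps_of_fst_eq hp hq h).symm hne

theorem even_ncard_cutGaps_iff (hA : IsClosed A) (hB : IsClosed B) (hd : Disjoint A B)
    (hsub : A ∪ B ⊆ Icc u v) (hu : u ∈ A ∪ B) (hv : v ∈ A ∪ B) :
    Even (cutGaps A B).ncard ↔ (u ∈ A ↔ v ∈ A) := by
  have hfin : ∀ w : ℝ, {q ∈ cutGaps A B | w ≤ q.1}.Finite :=
    fun w => (cutGaps_finite hA hB hd hsub).subset (sep_subset _ _)
  suffices H : ∀ n, ∀ w ∈ A ∪ B, {q ∈ cutGaps A B | w ≤ q.1}.ncard = n →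
      (Even n ↔ (w ∈ A ↔ v ∈ A)) by
    refine H _ u hu (congrArg ncard ?_)
    exact sep_eq_self_iff_mem_true.mpr fun q hq => (hsub (fst_mem_union_of_mem_cutGaps hq)).1
  intro n
  induction n with
  | zero =>
    intro w hw hn
    rw [iff_true_left Even.zero]
    by_contra hcol
    obtain ⟨q, hq, hwq, -⟩ := exists_mem_cutGaps_of_not_iff hA hB hd hw hv (hsub hw).2 hcol
    rw [ncard_eq_zero (hfin w)] at hn
    exact hn.subset ⟨hq, hwq⟩
  | succ n ih =>
    intro w hw hn
    obtain ⟨p, hpw, hmin⟩ :=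
      exists_min_image _ Prod.fst (hfin w) (nonempty_of_ncard_ne_zero (by omega))
    have ⟨hp, hwp⟩ := hpw
    have hfirst : ∀ q ∈ cutGaps A B, w ≤ q.1 → p.1 ≤ q.1 := fun q hq hwq => hmin q ⟨hq, hwq⟩
    have hrest := ih p.2 (snd_mem_union_of_mem_cutGaps hp) (by
      rw [cutGaps_sep_snd_le_eq_sdiff hp hwp hfirst, ncard_sdiff_singleton_of_mem hpw, hn]
      rfl)
    rw [Nat.even_add_one, hrest, snd_mem_iff_of_mem_cutGaps hd hp,
      ← mem_iff_fst_mem_of_forall_fst_le hA hB hd hw hp hwp hfirst]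
    tauto

end cutGaps

theorem IsClosed.exists_gap_around {T : Set ℝ} (hT : IsClosed T) {u v t : ℝ} (hu : u ∈ T)
    (hv : v ∈ T) (ht : t ∈ Icc u v) (htT : t ∉ T) :
    ∃ a ∈ T, ∃ b ∈ T, t ∈ Ioo a b ∧ Disjoint (Ioo a b) T := by
  have hT₁ : IsCompact (T ∩ Icc u t) := isCompact_Icc.inter_left hT
  have hT₂ : IsCompact (T ∩ Icc t v) := isCompact_Icc.inter_left hT
  have ha : sSup (T ∩ Icc u t) ∈ T ∩ Icc u t := hT₁.sSup_mem ⟨u, hu, le_rfl, ht.1⟩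
  have hb : sInf (T ∩ Icc t v) ∈ T ∩ Icc t v := hT₂.sInf_mem ⟨v, hv, ht.2, le_rfl⟩
  refine ⟨_, ha.1, _, hb.1, ⟨ha.2.2.lt_of_ne ?_, hb.2.1.lt_of_ne ?_⟩, disjoint_left.mpr ?_⟩
  · exact fun h => htT (h ▸ ha.1)
  · exact fun h => htT (h ▸ hb.1)
  rintro s ⟨has, hsb⟩ hs
  rcases le_total s t with hst | hts
  · exact has.not_ge (le_csSup hT₁.bddAbove ⟨hs, ha.2.1.trans has.le, hst⟩)
  · exact hsb.not_ge (csInf_le hT₂.bddBelow ⟨hs, hts, hsb.le.trans hb.2.2⟩)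

/-- One-dimensional invariance of domain. -/
theorem Continuous.isOpen_range_of_injective {α δ : Type*} [ConditionallyCompleteLinearOrder α]
    [DenselyOrdered α] [TopologicalSpace α] [OrderTopology α] [NoMinOrder α] [NoMaxOrder α]
    [LinearOrder δ] [TopologicalSpace δ] [OrderTopology δ] {f : α → δ} (hf : Continuous f)
    (hinj : Injective f) : IsOpen (range f) := by
  refine isOpen_iff_forall_mem_open.mpr ?_
  rintro _ ⟨t, rfl⟩
  obtain ⟨s, hs⟩ := exists_lt t
  obtain ⟨s', hs'⟩ := exists_gt t
  rcases hf.strictMono_of_inj hinj with hmono | hanti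
  · refine ⟨Ioo (f s) (f s'), ?_, isOpen_Ioo, hmono hs, hmono hs'⟩
    rw [← hf.image_Ioo_of_strictMono hmono]
    exact image_subset_range _ _
  · refine ⟨Ioo (f s') (f s), ?_, isOpen_Ioo, hanti hs', hanti hs⟩
    rw [← hf.continuousOn.image_Ioo_of_strictAntiOn (hs.trans hs').le (hanti.strictAntiOn _)]
    exact image_subset_range _ _

theorem ContinuousOn.closure_image_Ioo [T2Space X] {γ : ℝ → X} {a b : ℝ} (hab : a < b)
    (hγ : ContinuousOn γ (Icc a b)) : closure (γ '' Ioo a b) = γ '' Icc a b := by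
  refine (closure_minimal (image_mono Ioo_subset_Icc_self)
    (isCompact_Icc.image_of_continuousOn hγ).isClosed).antisymm ?_
  rw [← closure_Ioo hab.ne] at hγ ⊢
  exact hγ.image_closure

theorem connectedComponentIn_eq_of_isOpen {s e : Set X} {x : X} (he : IsPreconnected e)
    (heo : IsOpen e) (hes : e ⊆ s) (hcl : closure e ∩ s ⊆ e) (hx : x ∈ e) :
    connectedComponentIn s x = e :=
  (isPreconnected_connectedComponentIn.subset_of_closure_inter_subset heo
    ⟨x, mem_connectedComponentIn (hes hx), hx⟩
    fun _ ⟨hy, hys⟩ => hcl ⟨hy, connectedComponentIn_subset _ _ hys⟩).antisymm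
    (he.subset_connectedComponentIn hx hes)

theorem Circle.surjOn_exp_Icc (c : ℝ) : SurjOn Circle.exp (Icc c (c + 2 * Real.pi)) univ := by
  intro z _
  obtain ⟨s, -, rfl⟩ := Circle.surjOn_exp_neg_pi_pi (mem_univ z)
  refine ⟨toIcoMod Real.two_pi_pos c s, Ico_subset_Icc_self (toIcoMod_mem_Ico _ _ _), ?_⟩
  exact Circle.periodic_exp.sub_zsmul_eq _

theorem exists_loop_image_Icc_eq {C : Set X} (h : C ≃ₜ Circle) {w : X} (hw : w ∈ C) :
    ∃ γ : ℝ → X, ∃ c : ℝ, Continuous γ ∧ InjOn γ (Ioo c (c + 2 * Real.pi)) ∧ γ c = w ∧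
      γ (c + 2 * Real.pi) = w ∧ γ '' Icc c (c + 2 * Real.pi) = C := by
  set γ : ℝ → X := fun t => h.symm (Circle.exp t)
  set c := Complex.arg (h ⟨w, hw⟩)
  have hγc : γ c = w := by simp [γ, c]
  refine ⟨γ, c, continuous_subtype_val.comp (h.symm.continuous.comp (by fun_prop)), ?_, hγc,
    by rw [← hγc]; simp [γ], ?_⟩
  · exact fun s hs t ht hst => Circle.exp_injOn_Ico (by linarith) (Ioo_subset_Ico_self hs)
      (Ioo_subset_Ico_self ht) (h.symm.injective (Subtype.ext hst))
  · refine (image_subset_iff.mpr fun t _ => (h.symm _).2).antisymm fun x hx => ?_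
    obtain ⟨t, ht, hxt⟩ := Circle.surjOn_exp_Icc c (mem_univ (h ⟨x, hx⟩))
    exact ⟨t, ht, by simp [hxt]⟩

namespace GraphLike

variable (G : GraphLike X) {γ : ℝ → X}

/-- Inside `X \ V ≅ E × (0, 1)` an injective path stays in one edge and is monotone along it. -/
theorem isOpen_image_Ioo {a b : ℝ} (hγ : ContinuousOn γ (Ioo a b))
    (hinj : InjOn γ (Ioo a b)) (hV : γ '' Ioo a b ⊆ G.Vᶜ) : IsOpen (γ '' Ioo a b) := by
  rcases le_or_gt b a with hba | hab
  · simp [Ioo_eq_empty_of_le hba]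
  let _ : TopologicalSpace G.E := ⊥
  have : DiscreteTopology G.E := ⟨rfl⟩
  have : Inhabited (Ioo a b) := Classical.inhabited_of_nonempty (nonempty_Ioo_subtype hab)
  have : PreconnectedSpace (Ioo a b) := Subtype.preconnectedSpace isPreconnected_Ioo
  obtain ⟨ψ⟩ := G.homeo
  let γ' : Ioo a b → ↥(G.Vᶜ) := fun t => ⟨γ t, hV (mem_image_of_mem γ t.2)⟩
  have hψγ : Continuous fun t => ψ (γ' t) :=
    ψ.continuous.comp (hγ.domRestrict.subtype_mk _)
  set i := (ψ (γ' default)).1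
  have hi : ∀ t, (ψ (γ' t)).1 = i :=
    fun t => PreconnectedSpace.constant inferInstance (continuous_fst.comp hψγ)
  let φ : Ioo a b → Ioo (0 : ℝ) 1 := fun t => (ψ (γ' t)).2
  have hφ : IsOpen (range φ) := by
    refine (continuous_snd.comp hψγ).isOpen_range_of_injective fun s t hst => ?_
    have := ψ.injective (Prod.ext ((hi s).trans (hi t).symm) hst)
    exact Subtype.ext (hinj s.2 t.2 (congrArg Subtype.val this))
  have himage : γ '' Ioo a b = Subtype.val '' (ψ ⁻¹' ({i} ×ˢ range φ)) := by
    ext x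
    constructor
    · rintro ⟨t, ht, rfl⟩
      exact ⟨γ' ⟨t, ht⟩, ⟨hi _, ⟨t, ht⟩, rfl⟩, rfl⟩
    · rintro ⟨y, ⟨hy, t, ht⟩, rfl⟩
      rw [ψ.injective (Prod.ext (hy.trans (hi t).symm) ht.symm)]
      exact ⟨t, t.2, rfl⟩
  rw [himage]
  exact G.closedV.isOpen_compl.isOpenMap_subtype_val _
    (ψ.continuous.isOpen_preimage _ ((isOpen_discrete _).prod hφ))

variable [T2Space X]

theorem connectedComponentIn_eq_image_Ioo {a b t : ℝ} (hγ : ContinuousOn γ (Icc a b))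
    (hinj : InjOn γ (Ioo a b)) (ha : γ a ∈ G.V) (hb : γ b ∈ G.V) (hV : γ '' Ioo a b ⊆ G.Vᶜ)
    (ht : t ∈ Ioo a b) : connectedComponentIn G.Vᶜ (γ t) = γ '' Ioo a b := by
  have hγ' := hγ.mono Ioo_subset_Icc_self
  refine connectedComponentIn_eq_of_isOpen (isPreconnected_Ioo.image _ hγ')
    (G.isOpen_image_Ioo hγ' hinj hV) hV ?_ (mem_image_of_mem γ ht)
  rw [hγ.closure_image_Ioo (ht.1.trans ht.2)]
  rintro _ ⟨⟨s, hs, rfl⟩, hsV⟩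
  refine ⟨s, ⟨hs.1.lt_of_ne ?_, hs.2.lt_of_ne ?_⟩, rfl⟩
  · rintro rfl; exact hsV ha
  · rintro rfl; exact hsV hb

variable (S : G.Separation) {u v : ℝ}

theorem image_Ioo_mem_cut (hγ : ContinuousOn γ (Icc u v)) (hinj : InjOn γ (Ioo u v)) {p : ℝ × ℝ}
    (hp : p ∈ cutGaps (Icc u v ∩ γ ⁻¹' S.A) (Icc u v ∩ γ ⁻¹' S.B)) :
    γ '' Ioo p.1 p.2 ∈ G.cut S.A S.B := by
  have hsub : (Icc u v ∩ γ ⁻¹' S.A) ∪ (Icc u v ∩ γ ⁻¹' S.B) ⊆ Icc u v :=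
    union_subset inter_subset_left inter_subset_left
  have hp' := Icc_subset_of_mem_cutGaps hsub hp
  have hinj' := hinj.mono (Ioo_subset_of_mem_cutGaps hsub hp)
  obtain ⟨hab, hgap, hcol⟩ := hp
  have hends : γ p.1 ∈ G.V ∧ γ p.2 ∈ G.V := by
    rcases hcol with ⟨h₁, h₂⟩ | ⟨h₁, h₂⟩
    exacts [⟨S.clopenA.1 h₁.2, S.clopenB.1 h₂.2⟩, ⟨S.clopenB.1 h₁.2, S.clopenA.1 h₂.2⟩]
  have hV : γ '' Ioo p.1 p.2 ⊆ G.Vᶜ := by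
    rintro _ ⟨s, hs, rfl⟩ hsV
    rw [← S.union] at hsV
    have hsuv := hp' (Ioo_subset_Icc_self hs)
    exact disjoint_left.mp hgap hs (hsV.imp (⟨hsuv, ·⟩) (⟨hsuv, ·⟩))
  obtain ⟨t, ht⟩ := nonempty_Ioo.mpr hab
  have hedge := G.connectedComponentIn_eq_image_Ioo (hγ.mono hp') hinj' hends.1 hends.2 hV ht
  have hcl : γ p.1 ∈ closure (γ '' Ioo p.1 p.2) ∧ γ p.2 ∈ closure (γ '' Ioo p.1 p.2) := by
    rw [(hγ.mono hp').closure_image_Ioo hab]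
    exact ⟨mem_image_of_mem γ (left_mem_Icc.2 hab.le), mem_image_of_mem γ (right_mem_Icc.2 hab.le)⟩
  refine ⟨⟨γ t, hV (mem_image_of_mem γ ht), hedge.symm⟩, ?_⟩
  rcases hcol with ⟨h₁, h₂⟩ | ⟨h₁, h₂⟩
  exacts [⟨⟨_, hcl.1, h₁.2⟩, ⟨_, hcl.2, h₂.2⟩⟩, ⟨⟨_, hcl.2, h₂.2⟩, ⟨_, hcl.1, h₁.2⟩⟩]

theorem exists_mem_cutGaps_of_mem_cut (hγ : ContinuousOn γ (Icc u v)) (hinj : InjOn γ (Ioo u v))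
    (hu : γ u ∈ G.V) (hv : γ v ∈ G.V) {e : Set X} (he : e ∈ G.cut S.A S.B)
    (heC : e ⊆ γ '' Icc u v) :
    ∃ p ∈ cutGaps (Icc u v ∩ γ ⁻¹' S.A) (Icc u v ∩ γ ⁻¹' S.B), γ '' Ioo p.1 p.2 = e := by
  obtain ⟨⟨x, hxV, rfl⟩, ⟨y, hy, hyA⟩, ⟨z, hz, hzB⟩⟩ := he
  obtain ⟨t, ht, rfl⟩ := heC (mem_connectedComponentIn hxV)
  have hT : IsClosed (Icc u v ∩ γ ⁻¹' G.V) :=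
    hγ.preimage_isClosed_of_isClosed isClosed_Icc G.closedV
  obtain ⟨a, ⟨hau, ha⟩, b, ⟨hbv, hb⟩, htab, hgap⟩ :=
    hT.exists_gap_around ⟨left_mem_Icc.2 (ht.1.trans ht.2), hu⟩
      ⟨right_mem_Icc.2 (ht.1.trans ht.2), hv⟩ ht fun h => hxV h.2
  have hab : a < b := htab.1.trans htab.2
  have habuv : Icc a b ⊆ Icc u v := Icc_subset_Icc hau.1 hbv.2
  have hV : γ '' Ioo a b ⊆ G.Vᶜ := by
    rintro _ ⟨s, hs, rfl⟩ hsV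
    exact disjoint_left.mp hgap hs ⟨habuv (Ioo_subset_Icc_self hs), hsV⟩
  have hedge := G.connectedComponentIn_eq_image_Ioo (hγ.mono habuv)
    (hinj.mono (Ioo_subset_Ioo hau.1 hbv.2)) ha hb hV htab
  have hends : ∀ y ∈ closure (γ '' Ioo a b), y ∈ G.V → y = γ a ∨ y = γ b := by
    rw [(hγ.mono habuv).closure_image_Ioo hab]
    rintro _ ⟨s, hs, rfl⟩ hsV
    rcases hs.1.eq_or_lt with rfl | has
    · exact Or.inl rfl
    rcases hs.2.eq_or_lt with rfl | hsb
    · exact Or.inr rfl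
    exact absurd hsV (hV ⟨s, ⟨has, hsb⟩, rfl⟩)
  rw [hedge] at hy hz ⊢
  refine ⟨(a, b), ⟨hab, hgap.mono_right (union_subset ?_ ?_), ?_⟩, rfl⟩
  · exact inter_subset_inter_right _ (preimage_mono S.clopenA.1)
  · exact inter_subset_inter_right _ (preimage_mono S.clopenB.1)
  have hAB : Disjoint S.A S.B := disjoint_iff_inter_eq_empty.mpr S.disjoint
  rcases hends y hy (S.clopenA.1 hyA) with rfl | rfl <;>
    rcases hends z hz (S.clopenB.1 hzB) with rfl | rfl
  · exact absurd hzB (disjoint_left.mp hAB hyA)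
  · exact Or.inl ⟨⟨hau, hyA⟩, ⟨hbv, hzB⟩⟩
  · exact Or.inr ⟨⟨hau, hzB⟩, ⟨hbv, hyA⟩⟩
  · exact absurd hzB (disjoint_left.mp hAB hyA)

theorem setOf_mem_cut_subset_image_Icc_eq (hγ : ContinuousOn γ (Icc u v))
    (hinj : InjOn γ (Ioo u v)) (hu : γ u ∈ G.V) (hv : γ v ∈ G.V) :
    {e | e ∈ G.cut S.A S.B ∧ e ⊆ γ '' Icc u v} =
      (fun p : ℝ × ℝ => γ '' Ioo p.1 p.2) ''
        cutGaps (Icc u v ∩ γ ⁻¹' S.A) (Icc u v ∩ γ ⁻¹' S.B) := by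
  ext e
  constructor
  · rintro ⟨he, heC⟩
    exact G.exists_mem_cutGaps_of_mem_cut S hγ hinj hu hv he heC
  · rintro ⟨p, hp, rfl⟩
    refine ⟨G.image_Ioo_mem_cut S hγ hinj hp, image_mono ?_⟩
    exact Ioo_subset_Icc_self.trans
      (Icc_subset_of_mem_cutGaps (union_subset inter_subset_left inter_subset_left) hp)

theorem finite_even_setOf_mem_cut_subset_image_Icc (hγ : ContinuousOn γ (Icc u v))
    (hinj : InjOn γ (Ioo u v)) (huv : u ≤ v) (hu : γ u ∈ S.A) (hv : γ v ∈ S.A) :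
    {e | e ∈ G.cut S.A S.B ∧ e ⊆ γ '' Icc u v}.Finite ∧
      Even {e | e ∈ G.cut S.A S.B ∧ e ⊆ γ '' Icc u v}.ncard := by
  set A' := Icc u v ∩ γ ⁻¹' S.A
  set B' := Icc u v ∩ γ ⁻¹' S.B
  have hA' : IsClosed A' := hγ.preimage_isClosed_of_isClosed isClosed_Icc S.clopenA.2.1
  have hB' : IsClosed B' := hγ.preimage_isClosed_of_isClosed isClosed_Icc S.clopenB.2.1
  have hd : Disjoint A' B' :=
    ((disjoint_iff_inter_eq_empty.mpr S.disjoint).preimage γ).mono inter_subset_right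
      inter_subset_right
  have hsub : A' ∪ B' ⊆ Icc u v := union_subset inter_subset_left inter_subset_left
  have hu' : u ∈ A' := ⟨left_mem_Icc.2 huv, hu⟩
  have hv' : v ∈ A' := ⟨right_mem_Icc.2 huv, hv⟩
  rw [G.setOf_mem_cut_subset_image_Icc_eq S hγ hinj (S.clopenA.1 hu) (S.clopenA.1 hv),
    (injOn_image_Ioo_cutGaps hsub hinj).ncard_image]
  exact ⟨(cutGaps_finite hA' hB' hd hsub).image _,
    (even_ncard_cutGaps_iff hA' hB' hd hsub (Or.inl hu') (Or.inl hv')).mpr (iff_of_true hu' hv')⟩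

end GraphLike

theorem circle_meets_cut_even_general [TopologicalSpace.MetrizableSpace X]
    (G : GraphLike X) {C : Set X} (hC : Nonempty (C ≃ₜ Circle)) (S : G.Separation) :
    {e | e ∈ G.cut S.A S.B ∧ e ⊆ C}.Finite ∧
    Even {e | e ∈ G.cut S.A S.B ∧ e ⊆ C}.ncard := by
  obtain ⟨h⟩ := hC
  rcases (C ∩ S.A).eq_empty_or_nonempty with hCA | ⟨w, hwC, hwA⟩
  · have hCcl : IsClosed C := (isCompact_iff_compactSpace.mpr h.symm.compactSpace).isClosed
    suffices {e | e ∈ G.cut S.A S.B ∧ e ⊆ C} = ∅ by simp [this]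
    refine eq_empty_of_forall_notMem ?_
    rintro e ⟨⟨-, ⟨x, hx, hxA⟩, -⟩, heC⟩
    exact hCA.subset ⟨closure_minimal heC hCcl hx, hxA⟩
  obtain ⟨γ, c, hγ, hinj, hγc, hγc', rfl⟩ := exists_loop_image_Icc_eq h hwC
  exact G.finite_even_setOf_mem_cut_subset_image_Icc S hγ.continuousOn hinj
    (by linarith [Real.two_pi_pos]) (hγc ▸ hwA) (hγc' ▸ hwA)

/-- For a topological circle `C` in a compact graph-like space and any
separation of the vertex set, the set of edges contained in `C` belonging to the induced
cut is finite of even cardinality. -/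
theorem circle_meets_cut_even [CompactSpace X] [TopologicalSpace.MetrizableSpace X]
    (G : GraphLike X) {C : Set X} (hC : Nonempty (C ≃ₜ Circle)) (S : G.Separation) :
    {e | e ∈ G.cut S.A S.B ∧ e ⊆ C}.Finite ∧
    Even {e | e ∈ G.cut S.A S.B ∧ e ⊆ C}.ncard :=
  circle_meets_cut_even_general G hC S
end

section
/- Let X be a graph-like continuum with vertex set V. Every cut E(A,B) induced by a separation (A,B) of V has even cardinality if and only if every vertex of X is even. -/
open Set Topology Filter Function

universe u

variable {X : Type u} [TopologicalSpace X]

/-- A vertex is even if it has a clopen neighbourhood `A` in `V` such that every clopen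
`C` with `v ∈ C ⊆ A` induces an even cut `E(C, V ∖ C)`. -/
def GraphLike.EvenVertex (G : GraphLike X) (v : X) : Prop :=
  ∃ A, G.ClopenIn A ∧ v ∈ A ∧
    ∀ C, G.ClopenIn C → v ∈ C → C ⊆ A →
      (G.cut C (G.V \ C)).Finite ∧ Even (G.cut C (G.V \ C)).ncard

/-- A vertex is odd if it has a clopen neighbourhood `A` in `V` such that every clopen
`C` with `v ∈ C ⊆ A` induces an odd cut `E(C, V ∖ C)`. -/
def GraphLike.OddVertex (G : GraphLike X) (v : X) : Prop :=
  ∃ A, G.ClopenIn A ∧ v ∈ A ∧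
    ∀ C, G.ClopenIn C → v ∈ C → C ⊆ A →
      (G.cut C (G.V \ C)).Finite ∧ Odd (G.cut C (G.V \ C)).ncard

/-!
An edge is an open arc `φ : (0,1) → X` embedded in a compact Hausdorff space, so its ends
`closure e \ e` are the union of the cluster sets of `φ` at `0` and at `1`. Each cluster set is a
decreasing intersection of continua, hence connected; lying in the totally disconnected vertex
set, it has at most one point. So every edge has at most two ends, and the cut of a disjoint
union of clopen sets is the symmetric difference of their cuts: even cuts are closed under
disjoint unions and differences.

If all cuts are even, every vertex is even with witness `V`. Conversely, an even vertex has a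
clopen neighbourhood all of whose clopen subsets have even cuts; finitely many such
neighbourhoods cover the compact set `V`, and splitting a clopen set along them shows that its
cut is even.
-/

open scoped symmDiff

theorem isPreconnected_iInter_of_directed {α ι : Type*} [TopologicalSpace α] [T2Space α]
    [Nonempty ι] {K : ι → Set α} (hdir : Directed (· ⊇ ·) K) (hcomp : ∀ i, IsCompact (K i))
    (hconn : ∀ i, IsPreconnected (K i)) : IsPreconnected (⋂ i, K i) := by
  have hL : IsCompact (⋂ i, K i) :=
    (hcomp (Classical.arbitrary ι)).of_isClosed_subset
      (isClosed_iInter fun i => (hcomp i).isClosed) (iInter_subset _ _)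
  rw [isPreconnected_closed_iff]
  intro t t' ht ht' hcov ⟨x, hxL, hxt⟩ ⟨y, hyL, hyt'⟩
  by_contra hdisj
  obtain ⟨O, O', hO, hO', htO, ht'O', hOO'⟩ := SeparatedNhds.of_isCompact_isCompact
    (hL.inter_right ht) (hL.inter_right ht')
    (disjoint_left.mpr fun z hz hz' => hdisj ⟨z, hz.1, hz.2, hz'.2⟩)
  have hLO : (⋂ i, K i) ⊆ O ∪ O' := fun z hz =>
    (hcov hz).imp (fun hzt => htO ⟨hz, hzt⟩) (fun hzt' => ht'O' ⟨hz, hzt'⟩)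
  obtain ⟨i, hi⟩ := exists_subset_nhds_of_isCompact hdir hcomp
    fun z hz => (hO.union hO').mem_nhds (hLO hz)
  obtain ⟨z, -, hzO, hzO'⟩ := hconn i O O' hO hO' hi
    ⟨x, mem_iInter.mp hxL i, htO ⟨hxL, hxt⟩⟩ ⟨y, mem_iInter.mp hyL i, ht'O' ⟨hyL, hyt'⟩⟩
  exact hOO'.ne_of_mem hzO hzO' rfl

def clusterSetAtBot {J α : Type*} [Preorder J] [TopologicalSpace α] (f : J → α) : Set α :=
  ⋂ a, closure (f '' Iio a)

section OpenArc

variable {J α : Type*} [TopologicalSpace J] [TopologicalSpace α] {f : J → α}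

theorem isPreconnected_clusterSetAtBot [ConditionallyCompleteLinearOrder J] [DenselyOrdered J]
    [OrderTopology J] [Nonempty J] [CompactSpace α] [T2Space α] (hf : Continuous f) :
    IsPreconnected (clusterSetAtBot f) :=
  isPreconnected_iInter_of_directed
    (Monotone.directed_ge fun _ _ hab => closure_mono (image_mono (Iio_subset_Iio hab)))
    (fun _ => isClosed_closure.isCompact)
    (fun _ => (isPreconnected_Iio.image f hf.continuousOn).closure)

theorem Topology.IsOpenEmbedding.clusterSetAtBot_subset [LinearOrder J] [ClosedIicTopology J]
    [NoMinOrder J] [Nonempty J] (hf : IsOpenEmbedding f) :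
    clusterSetAtBot f ⊆ closure (range f) \ range f := by
  refine subset_sdiff.mpr ⟨(iInter_subset _ (Classical.arbitrary J)).trans
    (closure_mono (image_subset_range _ _)), disjoint_right.mpr ?_⟩
  rintro _ ⟨s, rfl⟩ hs
  obtain ⟨b, hb⟩ := exists_lt s
  have hsep : Disjoint (closure (f '' Iio b)) (f '' Ioi b) :=
    ((disjoint_image_iff hf.injective).mpr
      ((Iic_disjoint_Ioi le_rfl).mono_left Iio_subset_Iic_self)).closure_left
      (hf.isOpenMap _ isOpen_Ioi)
  exact hsep.ne_of_mem (mem_iInter.mp hs b) (mem_image_of_mem f hb) rfl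

theorem closure_range_diff_range_subset [LinearOrder J] [CompactIccSpace J] [T2Space α]
    (hf : Continuous f) :
    closure (range f) \ range f ⊆ clusterSetAtBot f ∪ clusterSetAtBot (f ∘ OrderDual.ofDual) := by
  rintro y ⟨hy, hyf⟩
  by_contra! hK
  simp only [mem_union, clusterSetAtBot, mem_iInter, not_or, not_forall] at hK
  obtain ⟨⟨a, ha⟩, ⟨b, hb⟩⟩ := hK
  change y ∉ closure (f '' Ioi (OrderDual.ofDual b)) at hb
  have hcover : range f ⊆
      f '' Iio a ∪ f '' Icc a (OrderDual.ofDual b) ∪ f '' Ioi (OrderDual.ofDual b) := by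
    rintro _ ⟨t, rfl⟩
    rcases lt_or_ge t a with hta | hat
    · exact Or.inl (Or.inl (mem_image_of_mem f hta))
    rcases le_or_gt t (OrderDual.ofDual b) with htb | hbt
    · exact Or.inl (Or.inr (mem_image_of_mem f ⟨hat, htb⟩))
    · exact Or.inr (mem_image_of_mem f hbt)
  have hy' := closure_mono hcover hy
  rw [closure_union, closure_union, (isCompact_Icc.image hf).isClosed.closure_eq] at hy'
  rcases hy' with (h | h) | h
  · exact ha h
  · exact hyf (image_subset_range _ _ h)
  · exact hb h

/-- `clusterSetAtBot (f ∘ OrderDual.ofDual)` is the cluster set of `f` at the top end of `J`. -/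
theorem Topology.IsOpenEmbedding.closure_range_diff_range_eq [LinearOrder J] [OrderTopology J]
    [CompactIccSpace J] [NoMinOrder J] [NoMaxOrder J] [Nonempty J] [T2Space α]
    (hf : IsOpenEmbedding f) :
    closure (range f) \ range f = clusterSetAtBot f ∪ clusterSetAtBot (f ∘ OrderDual.ofDual) := by
  refine (closure_range_diff_range_subset hf.continuous).antisymm
    (union_subset hf.clusterSetAtBot_subset ?_)
  have hf' : IsOpenEmbedding (f ∘ OrderDual.ofDual) := hf
  simpa only [OrderDual.ofDual.surjective.range_comp] using hf'.clusterSetAtBot_subset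

end OpenArc

theorem Set.Finite.even_ncard_symmDiff {α : Type*} {s t : Set α} (hs : s.Finite)
    (ht : t.Finite) (hs' : Even s.ncard) (ht' : Even t.ncard) : Even (s ∆ t).ncard := by
  have hunion := ncard_union_add_ncard_inter s t hs ht
  rw [← show s ∆ t ∪ s ∩ t = s ∪ t from symmDiff_sup_inf s t,
    ncard_union_eq (show Disjoint (s ∆ t) (s ∩ t) from disjoint_symmDiff_inf s t)
      (hs.symmDiff ht) (hs.inter_of_left t)] at hunion
  rw [Nat.even_iff] at hs' ht' ⊢
  omega

namespace GraphLike

variable {G : GraphLike X} {e : Set X}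

lemma IsEdge.exists_isOpenEmbedding_s14 (he : G.IsEdge e) :
    ∃ φ : Ioo (0 : ℝ) 1 → X, IsOpenEmbedding φ ∧ range φ = e := by
  obtain ⟨x, hx, rfl⟩ := he
  let : TopologicalSpace G.E := ⊥
  have : DiscreteTopology G.E := ⟨rfl⟩
  have : ConnectedSpace (Ioo (0 : ℝ) 1) := Subtype.connectedSpace (isConnected_Ioo one_pos)
  obtain ⟨h⟩ := G.homeo
  set ε := (h ⟨x, hx⟩).1
  have hrange : range (Prod.mk ε : Ioo (0 : ℝ) 1 → G.E × Ioo (0 : ℝ) 1) =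
      connectedComponent (h ⟨x, hx⟩) := by
    rw [connectedComponent_prod, connectedComponent_eq_singleton,
      PreconnectedSpace.connectedComponent_eq_univ, singleton_prod, image_univ]
  have hε : IsOpenEmbedding (Prod.mk ε : Ioo (0 : ℝ) 1 → G.E × Ioo (0 : ℝ) 1) :=
    ⟨isEmbedding_prodMkRight ε, by
      rw [← image_univ, ← singleton_prod]; exact (isOpen_discrete _).prod isOpen_univ⟩
  refine ⟨fun t => h.symm (ε, t),
    G.closedV.isOpen_compl.isOpenEmbedding_subtypeVal.comp (h.symm.isOpenEmbedding.comp hε), ?_⟩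
  have hcc := h.symm.image_connectedComponentIn (mem_univ (h ⟨x, hx⟩))
  rw [image_univ, h.symm.surjective.range_eq, connectedComponentIn_univ,
    connectedComponentIn_univ, h.symm_apply_apply] at hcc
  rw [connectedComponentIn_eq_image hx, ← hcc, ← hrange, ← range_comp, ← range_comp]
  rfl

lemma IsEdge.closure_inter_compl (he : G.IsEdge e) : closure e ∩ G.Vᶜ = e := by
  obtain ⟨x, hx, rfl⟩ := he
  refine subset_antisymm ?_ (subset_inter subset_closure (connectedComponentIn_subset _ _))
  rintro y ⟨hy, hyV⟩
  rw [connectedComponentIn_eq_image hx] at hy ⊢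
  have : (⟨y, hyV⟩ : (G.Vᶜ : Set X)) ∈ closure (connectedComponent ⟨x, hx⟩) :=
    closure_subtype.mpr hy
  rw [isClosed_connectedComponent.closure_eq] at this
  exact ⟨_, this, rfl⟩

lemma IsEdge.exists_closure_inter_V_eq_union [CompactSpace X] [T2Space X] (he : G.IsEdge e) :
    ∃ K₀ K₁ : Set X, K₀.Subsingleton ∧ K₁.Subsingleton ∧ closure e ∩ G.V = K₀ ∪ K₁ := by
  obtain ⟨φ, hφ, rfl⟩ := he.exists_isOpenEmbedding_s14
  -- `Ioo 0 1` is conditionally complete, but Mathlib has no instance saying so.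
  let : Inhabited (Ioo (0 : ℝ) 1) := ⟨⟨1 / 2, by norm_num, by norm_num⟩⟩
  let : ConditionallyCompleteLinearOrder (Ioo (0 : ℝ) 1) :=
    ordConnectedSubsetConditionallyCompleteLinearOrder _
  have hends : closure (range φ) ∩ G.V =
      clusterSetAtBot φ ∪ clusterSetAtBot (φ ∘ OrderDual.ofDual) := by
    rw [← hφ.closure_range_diff_range_eq]
    nth_rw 3 [← he.closure_inter_compl]
    rw [sdiff_self_inter, sdiff_compl]
  have hV := totallyDisconnectedSpace_subtype_iff.mp G.zeroDimV
  have hsub : clusterSetAtBot φ ∪ clusterSetAtBot (φ ∘ OrderDual.ofDual) ⊆ G.V :=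
    hends ▸ inter_subset_right
  exact ⟨_, _, hV _ (subset_union_left.trans hsub) (isPreconnected_clusterSetAtBot hφ.continuous),
    hV _ (subset_union_right.trans hsub) (isPreconnected_clusterSetAtBot hφ.continuous), hends⟩

lemma mem_cut_iff {C : Set X} (hC : C ⊆ G.V) :
    e ∈ G.cut C (G.V \ C) ↔
      G.IsEdge e ∧ (closure e ∩ G.V ∩ C).Nonempty ∧ ((closure e ∩ G.V) \ C).Nonempty := by
  rw [cut, mem_ofPred_eq, inter_assoc, inter_eq_right.mpr hC, inter_sdiff_assoc]

-- Edges with fewer than two ends are recorded as loops `a = b`, which lie in no cut.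
lemma IsEdge.exists_mem_cut_iff_xor [CompactSpace X] [T2Space X] (he : G.IsEdge e) :
    ∃ a b : X, ∀ C ⊆ G.V, e ∈ G.cut C (G.V \ C) ↔ Xor (a ∈ C) (b ∈ C) := by
  obtain ⟨K₀, K₁, h₀, h₁, hK⟩ := he.exists_closure_inter_V_eq_union
  have hcut : ∀ C ⊆ G.V, e ∈ G.cut C (G.V \ C) ↔
      (∃ y ∈ K₀ ∪ K₁, y ∈ C) ∧ ∃ y ∈ K₀ ∪ K₁, y ∉ C := fun C hC => by
    rw [mem_cut_iff hC, hK, and_iff_right he]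
    rfl
  obtain ⟨x, -, -⟩ := he
  rcases h₀.eq_empty_or_singleton with rfl | ⟨a, rfl⟩ <;>
    rcases h₁.eq_empty_or_singleton with rfl | ⟨b, rfl⟩
  · exact ⟨x, x, fun C hC => by simp [hcut C hC]⟩
  · exact ⟨b, b, fun C hC => by simp [hcut C hC]⟩
  · exact ⟨a, a, fun C hC => by simp [hcut C hC]⟩
  · refine ⟨a, b, fun C hC => ?_⟩
    simp only [hcut C hC, mem_union, mem_singleton_iff, exists_eq_or_imp, exists_eq_left, Xor]
    tauto

lemma cut_union [CompactSpace X] [T2Space X] {C₁ C₂ : Set X} (h₁ : C₁ ⊆ G.V) (h₂ : C₂ ⊆ G.V)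
    (hd : Disjoint C₁ C₂) :
    G.cut (C₁ ∪ C₂) (G.V \ (C₁ ∪ C₂)) = G.cut C₁ (G.V \ C₁) ∆ G.cut C₂ (G.V \ C₂) := by
  ext e
  by_cases he : G.IsEdge e
  · obtain ⟨a, b, hab⟩ := he.exists_mem_cut_iff_xor
    have ha := hd.notMem_of_mem_left (a := a)
    have hb := hd.notMem_of_mem_left (a := b)
    rw [mem_symmDiff, hab _ (union_subset h₁ h₂), hab _ h₁, hab _ h₂, mem_union, mem_union]
    unfold Xor
    tauto
  · simp [mem_symmDiff, cut, he]

lemma clopenIn_V (G : GraphLike X) : G.ClopenIn G.V :=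
  ⟨subset_rfl, G.closedV, by simp⟩

lemma clopenIn_empty (G : GraphLike X) : G.ClopenIn ∅ :=
  ⟨empty_subset _, isClosed_empty, by simpa using G.closedV⟩

lemma ClopenIn.union {A B : Set X} (hA : G.ClopenIn A) (hB : G.ClopenIn B) :
    G.ClopenIn (A ∪ B) :=
  ⟨union_subset hA.1 hB.1, hA.2.1.union hB.2.1,
    by rw [← sdiff_inter_sdiff]; exact hA.2.2.inter hB.2.2⟩

lemma ClopenIn.inter {A B : Set X} (hA : G.ClopenIn A) (hB : G.ClopenIn B) :
    G.ClopenIn (A ∩ B) :=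
  ⟨inter_subset_left.trans hA.1, hA.2.1.inter hB.2.1,
    by rw [sdiff_inter]; exact hA.2.2.union hB.2.2⟩

lemma ClopenIn.diff {A B : Set X} (hA : G.ClopenIn A) (hB : G.ClopenIn B) :
    G.ClopenIn (A \ B) := by
  refine ⟨sdiff_subset.trans hA.1, ?_, ?_⟩
  · rw [← inter_eq_left.mpr hA.1, inter_sdiff_assoc]
    exact hA.2.1.inter hB.2.2
  · rw [sdiff_sdiff_right, inter_eq_right.mpr hB.1]
    exact hA.2.2.union hB.2.1

lemma Separation.B_eq (S : G.Separation) : S.B = G.V \ S.A := by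
  rw [← S.union, union_sdiff_left]
  exact (sdiff_eq_left.mpr (disjoint_iff_inter_eq_empty.mpr S.disjoint).symm).symm

lemma EvenCut.union [CompactSpace X] [T2Space X] {C₁ C₂ : Set X} (h₁ : C₁ ⊆ G.V)
    (h₂ : C₂ ⊆ G.V) (hd : Disjoint C₁ C₂) (e₁ : G.EvenCut C₁ (G.V \ C₁))
    (e₂ : G.EvenCut C₂ (G.V \ C₂)) : G.EvenCut (C₁ ∪ C₂) (G.V \ (C₁ ∪ C₂)) := by
  rw [EvenCut, cut_union h₁ h₂ hd]
  exact ⟨Set.Finite.symmDiff e₁.1 e₂.1, Set.Finite.even_ncard_symmDiff e₁.1 e₂.1 e₁.2 e₂.2⟩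

lemma EvenCut.diff [CompactSpace X] [T2Space X] {A D : Set X} (hA : A ⊆ G.V) (hDA : D ⊆ A)
    (eA : G.EvenCut A (G.V \ A)) (eD : G.EvenCut D (G.V \ D)) :
    G.EvenCut (A \ D) (G.V \ (A \ D)) := by
  have hsplit := cut_union (sdiff_subset.trans hA) (hDA.trans hA) disjoint_sdiff_left
  rw [sdiff_union_of_subset hDA] at hsplit
  rw [EvenCut, ← symmDiff_symmDiff_cancel_right (G.cut D (G.V \ D)) (G.cut (A \ D) _), ← hsplit]
  exact ⟨Set.Finite.symmDiff eA.1 eD.1, Set.Finite.even_ncard_symmDiff eA.1 eD.1 eA.2 eD.2⟩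

def EvenCutsIn (G : GraphLike X) (A : Set X) : Prop :=
  ∀ C, G.ClopenIn C → C ⊆ A → G.EvenCut C (G.V \ C)

lemma evenCutsIn_empty (G : GraphLike X) : G.EvenCutsIn ∅ := by
  rintro C - hC
  rw [subset_empty_iff.mp hC]
  simp [EvenCut, cut]

lemma EvenCutsIn.union [CompactSpace X] [T2Space X] {A B : Set X} (hA : G.ClopenIn A)
    (eA : G.EvenCutsIn A) (eB : G.EvenCutsIn B) : G.EvenCutsIn (A ∪ B) := by
  intro C hC hCAB
  have := EvenCut.union (inter_subset_left.trans hC.1) (sdiff_subset.trans hC.1)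
    (disjoint_sdiff_inter.symm) (eA _ (hC.inter hA) inter_subset_right)
    (eB _ (hC.diff hA) fun x hx => (hCAB hx.1).resolve_left hx.2)
  rwa [inter_union_sdiff] at this

lemma EvenVertex.exists_evenCutsIn [CompactSpace X] [T2Space X] {v : X} (hv : G.EvenVertex v) :
    ∃ A, G.ClopenIn A ∧ v ∈ A ∧ G.EvenCutsIn A := by
  obtain ⟨A, hA, hvA, hcuts⟩ := hv
  refine ⟨A, hA, hvA, fun D hD hDA => ?_⟩
  by_cases hvD : v ∈ D
  · exact hcuts D hD hvD hDA
  -- `A \ D` still contains `v`, and `D = A \ (A \ D)`.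
  have := EvenCut.diff hA.1 sdiff_subset (hcuts A hA hvA subset_rfl)
    (hcuts _ (hA.diff hD) ⟨hvA, hvD⟩ sdiff_subset)
  rwa [sdiff_sdiff_cancel_left hDA] at this

lemma evenCutsIn_V_of_forall_evenVertex [CompactSpace X] [T2Space X]
    (h : ∀ v ∈ G.V, G.EvenVertex v) : G.EvenCutsIn G.V := by
  obtain ⟨A, -, hVA, eA⟩ := G.closedV.isCompact.induction_on
    (p := fun s => ∃ A, G.ClopenIn A ∧ s ⊆ A ∧ G.EvenCutsIn A)
    ⟨∅, G.clopenIn_empty, subset_rfl, G.evenCutsIn_empty⟩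
    (fun _ _ hst ⟨A, hA, htA, eA⟩ => ⟨A, hA, hst.trans htA, eA⟩)
    (fun _ _ ⟨A, hA, hsA, eA⟩ ⟨B, hB, htB, eB⟩ =>
      ⟨A ∪ B, hA.union hB, union_subset_union hsA htB, eA.union hA eB⟩)
    (fun v hv => by
      obtain ⟨A, hA, hvA, eA⟩ := (h v hv).exists_evenCutsIn
      refine ⟨A, mem_nhdsWithin.mpr ⟨(G.V \ A)ᶜ, hA.2.2.isOpen_compl, fun hv' => hv'.2 hvA,
        fun y ⟨hy, hyV⟩ => ?_⟩, A, hA, subset_rfl, eA⟩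
      by_contra hyA
      exact hy ⟨hyV, hyA⟩)
  exact fun C hC hCV => eA C hC (hCV.trans hVA)

end GraphLike

theorem allCutsEven_iff_allVerticesEven_general
    [CompactSpace X] [TopologicalSpace.MetrizableSpace X]
    (G : GraphLike X) :
    (∀ S : G.Separation, G.EvenCut S.A S.B) ↔ ∀ v ∈ G.V, G.EvenVertex v := by
  refine ⟨fun h v hv => ⟨G.V, G.clopenIn_V, hv, fun C hC _ _ => ?_⟩, fun h S => ?_⟩
  · exact h ⟨C, G.V \ C, hC, G.clopenIn_V.diff hC, inter_sdiff_self _ _, union_sdiff_cancel hC.1⟩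
  · rw [S.B_eq]
    exact G.evenCutsIn_V_of_forall_evenVertex h S.A S.clopenA S.clopenA.1

/-- In a graph-like continuum, every cut is even iff every vertex
is even. -/
theorem allCutsEven_iff_allVerticesEven
    [CompactSpace X] [TopologicalSpace.MetrizableSpace X] [ConnectedSpace X]
    (G : GraphLike X) :
    (∀ S : G.Separation, G.EvenCut S.A S.B) ↔ ∀ v ∈ G.V, G.EvenVertex v :=
  allCutsEven_iff_allVerticesEven_general G
end
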